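/- arXiv:math/0701750 — 4 statements merged into one kernel-verified Lean document; each statement's English description precedes it below -/
import Mathlib

section
/- Let V = M_m(ℂ) × M_m(ℂ) with ω((A,B),(A',B')) = tr(A(B')^T − A'B^T). The subspace of V spanned by (Id, Id) together with all vectors (g^T + h, −(g + h^T)) for g, h traceless m×m matrices is Lagrangian with respect to ω, i.e. it is ω-isotropic of dimension m². -/
open Matrix

/-
For any scalar `c` the injective linear map `L M = (M, c (tr M) • 1 - Mᵀ)` has isotropic image,
since `ω(L M, L N) = c tr M tr N - tr (M N) - c tr N tr M + tr (N M) = 0`.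
For `c = 2 / m` its image is the given span: `L (gᵀ + h) = (gᵀ + h, -(g + hᵀ))` when `g, h` are
traceless, `L 1 = (1, 1)`, and conversely, with `t = tr M / m`, `L M` is `t • (1, 1)` plus the
generator for `g = 0`, `h = M - t • 1`. So the span is isotropic of dimension `dim M_m(ℂ) = m²`.
-/

namespace Matrix

variable {n R : Type*} [Fintype n] [DecidableEq n] [CommRing R]

def lagrangianParam (c : R) : Matrix n n R →ₗ[R] Matrix n n R × Matrix n n R :=
  LinearMap.id.prod
    (c • (traceLinearMap n R R).smulRight 1 - (transposeLinearEquiv n n R R).toLinearMap)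

@[simp]
theorem lagrangianParam_apply (c : R) (M : Matrix n n R) :
    lagrangianParam c M = (M, (c * M.trace) • 1 - Mᵀ) := by
  simp [lagrangianParam, smul_smul]

theorem lagrangianParam_injective (c : R) :
    Function.Injective (lagrangianParam c : Matrix n n R → _) :=
  fun M N h => by simpa using congrArg Prod.fst h

theorem trace_lagrangianParam_isotropic (c : R) (M N : Matrix n n R) :
    ((lagrangianParam c M).1 * (lagrangianParam c N).2ᵀ
      - (lagrangianParam c N).1 * (lagrangianParam c M).2ᵀ).trace = 0 := by
  simp only [lagrangianParam_apply, transpose_sub, transpose_smul, transpose_one,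
    transpose_transpose, Matrix.mul_sub, Matrix.mul_smul, Matrix.mul_one, trace_sub,
    trace_smul, smul_eq_mul, trace_mul_comm M N]
  ring

variable (n R) in
def lagrangianGenerators : Set (Matrix n n R × Matrix n n R) :=
  {(1, 1)} ∪ {p | ∃ g h : Matrix n n R, g.trace = 0 ∧ h.trace = 0 ∧ p = (gᵀ + h, -(g + hᵀ))}

theorem span_lagrangianGenerators {K : Type*} [Field K] (hn : (Fintype.card n : K) ≠ 0) :
    Submodule.span K (lagrangianGenerators n K) =
      LinearMap.range (lagrangianParam (2 / Fintype.card n : K)) := by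
  apply le_antisymm
  · rw [Submodule.span_le]
    rintro p (rfl | ⟨g, h, hg, hh, rfl⟩)
    · refine ⟨1, ?_⟩
      simp [div_mul_cancel₀ _ hn, two_smul]
    · refine ⟨gᵀ + h, ?_⟩
      simp [hg, hh]
  · rintro p ⟨M, rfl⟩
    set t := M.trace / Fintype.card n
    have htrace : (M - t • 1).trace = 0 := by
      simp [t, div_mul_cancel₀ _ hn]
    have hdecomp : lagrangianParam (2 / Fintype.card n : K) M =
        t • ((1, 1) : Matrix n n K × Matrix n n K) + (M - t • 1, -(M - t • 1)ᵀ) := by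
      have : 2 / (Fintype.card n : K) * M.trace = 2 * t := by ring
      ext : 1
      · simp
      · simp only [lagrangianParam_apply, this, Prod.snd_add, Prod.smul_snd, transpose_sub,
          transpose_smul, transpose_one]
        module
    rw [hdecomp]
    exact Submodule.add_mem _ (Submodule.smul_mem _ _ (Submodule.subset_span (Or.inl rfl)))
      (Submodule.subset_span (Or.inr ⟨0, M - t • 1, trace_zero .., htrace, by simp⟩))

end Matrix

/-- The subspace of `V = M_m(ℂ) × M_m(ℂ)` spanned by `(Id, Id)` together with all
`(gᵀ + h, −(g + hᵀ))` for traceless `g, h` is Lagrangian for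
`ω((A,B),(A',B')) = tr(A B'ᵀ − A' Bᵀ)`: it is `ω`-isotropic of dimension `m²`. -/
theorem stmt4 (m : ℕ) :
    ∀ S : Submodule ℂ (Matrix (Fin m) (Fin m) ℂ × Matrix (Fin m) (Fin m) ℂ),
    S = Submodule.span ℂ
        ({((1 : Matrix (Fin m) (Fin m) ℂ), (1 : Matrix (Fin m) (Fin m) ℂ))} ∪
          {p : Matrix (Fin m) (Fin m) ℂ × Matrix (Fin m) (Fin m) ℂ |
            ∃ g h : Matrix (Fin m) (Fin m) ℂ, g.trace = 0 ∧ h.trace = 0 ∧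
              p = (gᵀ + h, -(g + hᵀ))}) →
    (∀ x ∈ S, ∀ y ∈ S, (x.1 * y.2ᵀ - y.1 * x.2ᵀ).trace = 0) ∧
      Module.finrank ℂ S = m ^ 2 := by
  rintro S rfl
  rcases Nat.eq_zero_or_pos m with rfl | hm
  · exact ⟨fun x _ y _ => by simp [Subsingleton.elim x 0], Module.finrank_zero_of_subsingleton⟩
  have hrange := span_lagrangianGenerators (n := Fin m) (K := ℂ) (by simp [hm.ne'])
  rw [lagrangianGenerators] at hrange
  rw [hrange]
  refine ⟨?_, ?_⟩
  · rintro _ ⟨M, rfl⟩ _ ⟨N, rfl⟩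
    exact trace_lagrangianParam_isotropic _ M N
  · rw [LinearMap.finrank_range_of_inj (lagrangianParam_injective _),
      Module.finrank_matrix]
    simp [sq]
end

section
/- Let G = SL_m(ℂ) × SL_m(ℂ) act on pairs of m×m matrices by (g,h)·(A,B) = (g^T A h, g^{-1} B (h^{-1})^T), and suppose k + l ≤ m with k + l < m. Then for any pair (A,B) with AB^T = B^T A = 0, rk A = k, rk B = l, there exists (g,h) ∈ G and a scalar such that (g,h)·(A,B) is a scalar multiple of the pair of diagonal matrices (diag(1,...,1,0,...,0), diag(0,...,0,1,...,1,0,...,0)) with k ones in the first matrix and l ones (in positions k+1,...,k+l) in the second. -/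
/-!
View `A` and `Bᵀ` as endomorphisms `f`, `g` of `ℂᵐ` with `range g ≤ ker f` and
`range f ≤ ker g`. Lift a basis of `range f` along `f` to a complement of `ker f`, and extend a
basis of `range g` to a basis of `ker f`; symmetrically for `g`. This gives bases `v`, `w` with
`f vᵢ = wᵢ` for `i < k`, `g wᵢ = vᵢ` for `k ≤ i < k + l`, and all other images zero, i.e.
`A H = P D` and `Bᵀ P = H E` for the invertible matrices `H`, `P` with columns `v`, `w`. Since
`k + l < m`, the last column of `H` and of `P` is killed by `D` and `E`, so rescaling it gives
`det H = det P = 1`, and `(g, h) = ((P⁻¹)ᵀ, H)` works with `c = 1`.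
-/

open Matrix Module LinearMap Submodule

section LinearAlgebra

variable {K V : Type*} [DivisionRing K] [AddCommGroup V] [Module K V] [FiniteDimensional K V]

theorem exists_basis_sum_fin_extending {κ : Type*} [Fintype κ] {c : κ → V}
    (hc : LinearIndependent K c) {r : ℕ} (hr : finrank K V = Fintype.card κ + r) :
    ∃ b : Basis (κ ⊕ Fin r) K V, ∀ j, b (.inl j) = c j := by
  let b := Basis.sumExtend hc
  have : Finite (κ ⊕ Basis.sumExtendIndex hc) := Module.Finite.finite_basis b
  have : Finite (Basis.sumExtendIndex hc) := Finite.of_injective _ (Sum.inr_injective (α := κ))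
  have := Fintype.ofFinite (Basis.sumExtendIndex hc)
  have hcard : Fintype.card (Basis.sumExtendIndex hc) = r := by
    have := finrank_eq_card_basis b
    rw [Fintype.card_sum] at this
    omega
  refine ⟨b.reindex ((Equiv.refl κ).sumCongr (Fintype.equivFinOfCardEq hcard)), fun j => ?_⟩
  simp [b, Basis.sumExtend]
  rfl

theorem exists_basis_sum_preimage_ker {V' : Type*} [AddCommGroup V'] [Module K V']
    (f : V →ₗ[K] V') {ι κ : Type*} [Fintype ι] [Fintype κ] (u : Basis ι K (range f))
    {c : κ → V} (hc : LinearIndependent K c) (hcf : ∀ j, c j ∈ ker f)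
    {r : ℕ} (hr : finrank K V = Fintype.card ι + Fintype.card κ + r) :
    ∃ b : Basis ((ι ⊕ κ) ⊕ Fin r) K V, (∀ i, f (b (.inl (.inl i))) = u i) ∧
      (∀ j, b (.inl (.inr j)) = c j) ∧ ∀ j, f (b (.inr j)) = 0 := by
  obtain ⟨W, hW⟩ := (ker f).exists_isCompl
  let e : W ≃ₗ[K] range f := (quotientEquivOfIsCompl _ _ hW).symm.trans f.quotKerEquivRange
  have he (x : W) : f x = e x := rfl
  have hck : LinearIndependent K (fun j => (⟨c j, hcf j⟩ : ker f)) :=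
    LinearIndependent.of_comp (ker f).subtype hc
  have hker : finrank K (ker f) = Fintype.card κ + r := by
    have := f.finrank_range_add_finrank_ker
    rw [finrank_eq_card_basis u] at this
    omega
  obtain ⟨bK, hbK⟩ := exists_basis_sum_fin_extending hck hker
  refine ⟨(((u.map e.symm).prod bK).map (prodEquivOfIsCompl W (ker f) hW.symm)).reindex
    (Equiv.sumAssoc _ _ _).symm, fun i => ?_, fun j => ?_, fun j => ?_⟩
  · simp [he]
  · simp [hbK]
  · simp

theorem exists_bases_fin_of_range_le_ker {f g : V →ₗ[K] V} (hgf : range g ≤ ker f)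
    (hfg : range f ≤ ker g) {k l r : ℕ} (hk : finrank K (range f) = k)
    (hl : finrank K (range g) = l) (hr : finrank K V = k + l + r) :
    ∃ v w : Basis (Fin (k + l + r)) K V,
      (∀ j, f (v j) = (if (j : ℕ) < k then 1 else 0 : K) • w j) ∧
      ∀ j, g (w j) = (if k ≤ (j : ℕ) ∧ (j : ℕ) < k + l then 1 else 0 : K) • v j := by
  let p := finBasisOfFinrankEq K _ hk
  let q := finBasisOfFinrankEq K _ hl
  have hfq (j : Fin l) : f (q j) = 0 := hgf (q j).2
  have hgp (i : Fin k) : g (p i) = 0 := hfg (p i).2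
  obtain ⟨v, hvp, hvq, hv⟩ := exists_basis_sum_preimage_ker f p
    (q.linearIndependent.map' _ (ker_subtype _)) hfq (r := r) (by simp [hr])
  obtain ⟨w, hwq, hwp, hw⟩ := exists_basis_sum_preimage_ker g q
    (p.linearIndependent.map' _ (ker_subtype _)) hgp (r := r) (by simp [hr]; omega)
  let e : (Fin k ⊕ Fin l) ⊕ Fin r ≃ Fin (k + l + r) :=
    (finSumFinEquiv.sumCongr (Equiv.refl _)).trans finSumFinEquiv
  refine ⟨v.reindex e, w.reindex (((Equiv.sumComm _ _).sumCongr (Equiv.refl _)).trans e),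
    fun j => ?_, fun j => ?_⟩ <;>
  · obtain ⟨(i | i) | i, rfl⟩ := e.surjective j <;>
      simp [e, hvp, hvq, hv, hwq, hwp, hw, hfq, hgp, add_assoc]

end LinearAlgebra

section Matrices

variable {ι : Type*} [Fintype ι] [DecidableEq ι]

theorem mul_toMatrix_eq_toMatrix_mul_diagonal {K : Type*} [CommSemiring K] {A : Matrix ι ι K}
    {v w : ι → ι → K} {d : ι → K} (h : ∀ j, A *ᵥ v j = d j • w j) :
    A * (Pi.basisFun K ι).toMatrix v = (Pi.basisFun K ι).toMatrix w * diagonal d := by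
  ext i j
  rw [mul_diagonal]
  simpa [mul_apply, Module.Basis.toMatrix_apply, mulVec, dotProduct, mul_comm] using
    congrFun (h j) i

theorem diagonal_update_one_mul_diagonal {K : Type*} [Semiring K] {d : ι → K} {t : ι}
    (hd : d t = 0) (c : K) : diagonal (Function.update 1 t c) * diagonal d = diagonal d := by
  rw [diagonal_mul_diagonal]
  congr 1
  ext j
  rcases eq_or_ne j t with rfl | hj <;> simp [*]

theorem exists_det_eq_one_of_mul_eq_mul_diagonal {K : Type*} [Field K] {A B H P : Matrix ι ι K}
    {d e : ι → K} (hH : H.det ≠ 0) (hP : P.det ≠ 0) {t : ι} (hd : d t = 0) (he : e t = 0)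
    (hA : A * H = P * diagonal d) (hB : B * P = H * diagonal e) :
    ∃ H' P' : Matrix ι ι K, H'.det = 1 ∧ P'.det = 1 ∧
      A * H' = P' * diagonal d ∧ B * P' = H' * diagonal e := by
  let S (c : K) : Matrix ι ι K := diagonal (Function.update 1 t c)
  have hdet (X : Matrix ι ι K) (hX : X.det ≠ 0) : (X * S X.det⁻¹).det = 1 := by
    simp [S, det_diagonal, Finset.prod_update_of_mem, hX]
  have hcomm (f : ι → K) (c : K) : diagonal f * S c = S c * diagonal f := by
    simp only [S, diagonal_mul_diagonal, mul_comm]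
  refine ⟨H * S H.det⁻¹, P * S P.det⁻¹, hdet H hH, hdet P hP, ?_, ?_⟩
  · rw [← mul_assoc, hA, mul_assoc, hcomm, diagonal_update_one_mul_diagonal hd, mul_assoc,
      diagonal_update_one_mul_diagonal hd]
  · rw [← mul_assoc, hB, mul_assoc, hcomm, diagonal_update_one_mul_diagonal he, mul_assoc,
      diagonal_update_one_mul_diagonal he]

end Matrices

/-- If `k + l < m` and `A Bᵀ = Bᵀ A = 0` with `rk A = k`, `rk B = l`, then some
`(g,h) ∈ SL_m × SL_m` moves `(A,B)` (acting by `(gᵀ A h, g⁻¹ B (h⁻¹)ᵀ)`) to a nonzero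
scalar multiple of the pair of diagonal matrices `(diag(1^k,0), diag(0^k,1^l,0))`. -/
theorem stmt10 (m k l : ℕ) (hkl : k + l < m)
    (A B : Matrix (Fin m) (Fin m) ℂ)
    (h1 : A * Bᵀ = 0) (h2 : Bᵀ * A = 0) (hA : A.rank = k) (hB : B.rank = l) :
    ∃ (g h : Matrix (Fin m) (Fin m) ℂ) (c : ℂ), g.det = 1 ∧ h.det = 1 ∧ c ≠ 0 ∧
      gᵀ * A * h = c • Matrix.diagonal (fun i : Fin m => if (i : ℕ) < k then (1 : ℂ) else 0) ∧
      g⁻¹ * B * (h⁻¹)ᵀ =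
        c • Matrix.diagonal (fun i : Fin m =>
          if k ≤ (i : ℕ) ∧ (i : ℕ) < k + l then (1 : ℂ) else 0) := by
  obtain ⟨r, rfl⟩ : ∃ r, m = k + l + (r + 1) := ⟨m - (k + l) - 1, by omega⟩
  have hBt : Bᵀ.rank = l := by rw [rank_transpose, hB]
  obtain ⟨v, w, hv, hw⟩ := exists_bases_fin_of_range_le_ker (r := r + 1)
    (f := A.mulVecLin) (g := Bᵀ.mulVecLin)
    (range_le_ker_iff.mpr (by rw [← mulVecLin_mul, h1, mulVecLin_zero]))
    (range_le_ker_iff.mpr (by rw [← mulVecLin_mul, h2, mulVecLin_zero])) hA hBt (by simp)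
  obtain ⟨H, P, hH, hP, hAH, hBP⟩ := exists_det_eq_one_of_mul_eq_mul_diagonal
    ((Pi.basisFun ℂ _).isUnit_det v).ne_zero ((Pi.basisFun ℂ _).isUnit_det w).ne_zero
    (t := Fin.last _) (by simp [add_assoc]) (by simp)
    (mul_toMatrix_eq_toMatrix_mul_diagonal hv) (mul_toMatrix_eq_toMatrix_mul_diagonal hw)
  have hHu : IsUnit H.det := by simp [hH]
  have hPu : IsUnit P.det := by simp [hP]
  refine ⟨(P⁻¹)ᵀ, H, 1, by simp [hP], hH, one_ne_zero, ?_, ?_⟩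
  · rw [transpose_transpose, one_smul, mul_assoc, hAH, ← mul_assoc, nonsing_inv_mul _ hPu,
      one_mul]
  · have hE := congrArg (H⁻¹ * ·) hBP
    simp only [nonsing_inv_mul_cancel_left _ _ hHu] at hE
    rw [one_smul, ← transpose_nonsing_inv, nonsing_inv_nonsing_inv _ hPu, ← diagonal_transpose,
      ← hE, transpose_mul, transpose_mul, transpose_transpose, mul_assoc]
end

section
/- The map ℙ^1 × ℙ^1 × ℙ^1 → ℙ(M_2(ℂ) × M_2(ℂ)) sending ([μ_1,μ_2],[ν_1,ν_2],[ξ_1,ξ_2]) to the class of the pair of matrices (ξ_1·(μ_iν_j)_{ij}, ξ_2·((μ_2ν_2, −μ_2ν_1),(−μ_1ν_2, μ_1ν_1))) is a well-defined closed embedding whose image is contained in the set {[A,B] : AB^T = B^T A = 0, rk A ≤ 1, rk B ≤ 1}. -/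
/-!
Up to signs and a permutation of coordinates, the eight entries of the pair `(A, B)` are the
eight products `ξₖ μᵢ νⱼ`, i.e. the coordinates of the pure tensor `ξ ⊗ μ ⊗ ν`: the map is a
linear change of coordinates composed with the Segre embedding, hence well defined and
injective on projective classes. Moreover `A = ξ₁ μ νᵀ` and `B = ξ₂ μ^⊥ (ν^⊥)ᵀ`, where
`(p₁, p₂)^⊥ = (p₂, -p₁)` is orthogonal to `p` for the bilinear form `⬝ᵥ`; so `A` and `B` have rank
at most one, and `A Bᵀ` and `Bᵀ A` vanish because they contain the factors `ν ⬝ᵥ ν^⊥` and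
`μ^⊥ ⬝ᵥ μ`.
-/

open Matrix

section ProportionalFactors

variable {K ι κ τ : Type*}

lemma uncurry_mul_ne_zero [MulZeroClass K] [NoZeroDivisors K] {x : ι → K} {y : κ → K}
    (hx : x ≠ 0) (hy : y ≠ 0) :
    (fun p : ι × κ => x p.1 * y p.2) ≠ 0 := by
  obtain ⟨i, hi⟩ := Function.ne_iff.mp hx
  obtain ⟨j, hj⟩ := Function.ne_iff.mp hy
  exact Function.ne_iff.mpr ⟨(i, j), mul_ne_zero hi hj⟩

variable [Field K]

lemma exists_smul_eq_of_mul_eq_mul {x x' : ι → K} {y y' : κ → K} {c : K} (hc : c ≠ 0)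
    (hx : x ≠ 0) (hy : y ≠ 0) (h : ∀ i j, x' i * y' j = c * (x i * y j)) :
    ∃ a : K, a ≠ 0 ∧ x' = a • x := by
  obtain ⟨i₀, hi₀⟩ := Function.ne_iff.mp hx
  obtain ⟨j₀, hj₀⟩ := Function.ne_iff.mp hy
  have hy' : y' j₀ ≠ 0 := by
    intro h₀
    have := h i₀ j₀
    rw [h₀, mul_zero] at this
    exact mul_ne_zero hc (mul_ne_zero hi₀ hj₀) this.symm
  refine ⟨c * y j₀ / y' j₀, div_ne_zero (mul_ne_zero hc hj₀) hy', funext fun i => ?_⟩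
  simp only [Pi.smul_apply, smul_eq_mul]
  field_simp
  linear_combination h i j₀

lemma exists_smul_eq_of_triple_mul_eq_mul {x x' : ι → K} {y y' : κ → K} {z z' : τ → K} {c : K}
    (hc : c ≠ 0) (hx : x ≠ 0) (hy : y ≠ 0) (hz : z ≠ 0)
    (h : ∀ i j k, x' i * (y' j * z' k) = c * (x i * (y j * z k))) :
    (∃ a : K, a ≠ 0 ∧ x' = a • x) ∧ (∃ b : K, b ≠ 0 ∧ y' = b • y) ∧
      (∃ d : K, d ≠ 0 ∧ z' = d • z) :=
  ⟨exists_smul_eq_of_mul_eq_mul hc hx (uncurry_mul_ne_zero hy hz) fun i p => h i p.1 p.2,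
    exists_smul_eq_of_mul_eq_mul (y' := fun p : ι × τ => x' p.1 * z' p.2) hc hy
      (uncurry_mul_ne_zero hx hz) fun j p => by linear_combination h p.1 j p.2,
    exists_smul_eq_of_mul_eq_mul (y' := fun p : ι × κ => x' p.1 * y' p.2) hc hz
      (uncurry_mul_ne_zero hx hy) fun k p => by linear_combination h p.1 p.2 k⟩

end ProportionalFactors

section FinTwo

variable {K : Type*}

lemma vecCons_fst_snd_ne_zero [Zero K] {p : K × K} (hp : p ≠ 0) : ![p.1, p.2] ≠ 0 :=
  fun h => hp (Prod.ext (by simpa using congrFun h 0) (by simpa using congrFun h 1))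

lemma Prod.eq_smul_of_vecCons_eq_smul [Mul K] {p q : K × K} {a : K}
    (h : ![p.1, p.2] = a • ![q.1, q.2]) : p = a • q :=
  Prod.ext (by simpa using congrFun h 0) (by simpa using congrFun h 1)

lemma dotProduct_vecCons_perp [CommRing K] (p : K × K) : ![p.1, p.2] ⬝ᵥ ![p.2, -p.1] = 0 := by
  simp only [dotProduct, Fin.sum_univ_two, cons_val_zero, cons_val_one, cons_val_fin_one]
  ring

end FinTwo

section SegrePair

variable {K : Type*} [CommRing K]

def segrePair (μ ν ξ : K × K) : Matrix (Fin 2) (Fin 2) K × Matrix (Fin 2) (Fin 2) K :=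
  (ξ.1 • !![μ.1 * ν.1, μ.1 * ν.2; μ.2 * ν.1, μ.2 * ν.2],
    ξ.2 • !![μ.2 * ν.2, -(μ.2 * ν.1); -(μ.1 * ν.2), μ.1 * ν.1])

lemma segrePair_fst (μ ν ξ : K × K) :
    (segrePair μ ν ξ).1 = vecMulVec (ξ.1 • ![μ.1, μ.2]) ![ν.1, ν.2] := by
  ext i j
  fin_cases i <;> fin_cases j <;> simp [segrePair, vecMulVec_apply, mul_assoc]

lemma segrePair_snd (μ ν ξ : K × K) :
    (segrePair μ ν ξ).2 = vecMulVec (ξ.2 • ![μ.2, -μ.1]) ![ν.2, -ν.1] := by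
  ext i j
  fin_cases i <;> fin_cases j <;> simp [segrePair, vecMulVec_apply, mul_assoc]

lemma rank_segrePair_fst_le [StrongRankCondition K] (μ ν ξ : K × K) :
    (segrePair μ ν ξ).1.rank ≤ 1 :=
  segrePair_fst μ ν ξ ▸ rank_vecMulVec_le _ _

lemma rank_segrePair_snd_le [StrongRankCondition K] (μ ν ξ : K × K) :
    (segrePair μ ν ξ).2.rank ≤ 1 :=
  segrePair_snd μ ν ξ ▸ rank_vecMulVec_le _ _

lemma segrePair_fst_mul_transpose_snd (μ ν ξ : K × K) :
    (segrePair μ ν ξ).1 * (segrePair μ ν ξ).2ᵀ = 0 := by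
  rw [segrePair_fst, segrePair_snd, transpose_vecMulVec, vecMulVec_mul_vecMulVec,
    dotProduct_vecCons_perp, zero_smul, vecMulVec_zero]

lemma transpose_segrePair_snd_mul_fst (μ ν ξ : K × K) :
    (segrePair μ ν ξ).2ᵀ * (segrePair μ ν ξ).1 = 0 := by
  rw [segrePair_fst, segrePair_snd, transpose_vecMulVec, vecMulVec_mul_vecMulVec,
    smul_dotProduct, dotProduct_smul, dotProduct_comm, dotProduct_vecCons_perp]
  simp

lemma triple_mul_eq_of_segrePair_eq_smul {μ ν ξ μ' ν' ξ' : K × K} {c : K}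
    (h : segrePair μ' ν' ξ' = c • segrePair μ ν ξ) (k i j : Fin 2) :
    ![ξ'.1, ξ'.2] k * (![μ'.1, μ'.2] i * ![ν'.1, ν'.2] j)
      = c * (![ξ.1, ξ.2] k * (![μ.1, μ.2] i * ![ν.1, ν.2] j)) := by
  simp only [segrePair, Prod.ext_iff, ← Matrix.ext_iff, Fin.forall_fin_two, Prod.smul_fst,
    Prod.smul_snd, Matrix.smul_apply, of_apply, cons_val', cons_val_zero, cons_val_one,
    cons_val_fin_one, smul_eq_mul, mul_neg, neg_inj] at h
  fin_cases k <;> fin_cases i <;> fin_cases j <;> simp <;> grind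

end SegrePair

section SegrePairField

variable {K : Type*} [Field K]

lemma segrePair_ne_zero {μ ν ξ : K × K} (hμ : μ ≠ 0) (hν : ν ≠ 0) (hξ : ξ ≠ 0) :
    segrePair μ ν ξ ≠ 0 := by
  intro h
  have hzero : segrePair μ ν ξ = (0 : K) • segrePair μ ν ξ := by rw [h, smul_zero]
  refine uncurry_mul_ne_zero (vecCons_fst_snd_ne_zero hξ) (uncurry_mul_ne_zero
    (vecCons_fst_snd_ne_zero hμ) (vecCons_fst_snd_ne_zero hν)) (funext fun p => ?_)
  simpa using triple_mul_eq_of_segrePair_eq_smul hzero p.1 p.2.1 p.2.2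

lemma exists_smul_eq_of_segrePair_eq_smul {μ ν ξ μ' ν' ξ' : K × K} {c : K} (hc : c ≠ 0)
    (hμ : μ ≠ 0) (hν : ν ≠ 0) (hξ : ξ ≠ 0) (h : segrePair μ' ν' ξ' = c • segrePair μ ν ξ) :
    (∃ a : K, a ≠ 0 ∧ μ' = a • μ) ∧ (∃ b : K, b ≠ 0 ∧ ν' = b • ν) ∧
      (∃ d : K, d ≠ 0 ∧ ξ' = d • ξ) := by
  obtain ⟨⟨d, hd, hξ'⟩, ⟨a, ha, hμ'⟩, ⟨b, hb, hν'⟩⟩ :=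
    exists_smul_eq_of_triple_mul_eq_mul hc (vecCons_fst_snd_ne_zero hξ)
      (vecCons_fst_snd_ne_zero hμ) (vecCons_fst_snd_ne_zero hν)
      (triple_mul_eq_of_segrePair_eq_smul h)
  exact ⟨⟨a, ha, Prod.eq_smul_of_vecCons_eq_smul hμ'⟩,
    ⟨b, hb, Prod.eq_smul_of_vecCons_eq_smul hν'⟩, ⟨d, hd, Prod.eq_smul_of_vecCons_eq_smul hξ'⟩⟩

end SegrePairField

/-- The Segre-type map `ℙ¹×ℙ¹×ℙ¹ → ℙ(M_2(ℂ) × M_2(ℂ))` given on homogeneous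
coordinates by `A = ξ₁ (μᵢνⱼ)`, `B = ξ₂ ((μ₂ν₂, −μ₂ν₁),(−μ₁ν₂, μ₁ν₁))` is a
well-defined embedding (nonzero image, injective on projective classes) whose image is
contained in `X_deg(2,1) = {[A,B] : A Bᵀ = Bᵀ A = 0, rk A ≤ 1, rk B ≤ 1}`. -/
theorem stmt16 (μ ν ξ : ℂ × ℂ) (hμ : μ ≠ 0) (hν : ν ≠ 0) (hξ : ξ ≠ 0) :
    ((ξ.1 • !![μ.1 * ν.1, μ.1 * ν.2; μ.2 * ν.1, μ.2 * ν.2],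
        ξ.2 • !![μ.2 * ν.2, -(μ.2 * ν.1); -(μ.1 * ν.2), μ.1 * ν.1]) : Matrix (Fin 2) (Fin 2) ℂ × Matrix (Fin 2) (Fin 2) ℂ) ≠ 0 ∧
    (ξ.1 • !![μ.1 * ν.1, μ.1 * ν.2; μ.2 * ν.1, μ.2 * ν.2]) *
        (ξ.2 • !![μ.2 * ν.2, -(μ.2 * ν.1); -(μ.1 * ν.2), μ.1 * ν.1] : Matrix (Fin 2) (Fin 2) ℂ)ᵀ = 0 ∧
    (ξ.2 • !![μ.2 * ν.2, -(μ.2 * ν.1); -(μ.1 * ν.2), μ.1 * ν.1] : Matrix (Fin 2) (Fin 2) ℂ)ᵀ *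
        (ξ.1 • !![μ.1 * ν.1, μ.1 * ν.2; μ.2 * ν.1, μ.2 * ν.2]) = 0 ∧
    (ξ.1 • !![μ.1 * ν.1, μ.1 * ν.2; μ.2 * ν.1, μ.2 * ν.2] : Matrix (Fin 2) (Fin 2) ℂ).rank ≤ 1 ∧
    (ξ.2 • !![μ.2 * ν.2, -(μ.2 * ν.1); -(μ.1 * ν.2), μ.1 * ν.1] : Matrix (Fin 2) (Fin 2) ℂ).rank ≤ 1 ∧
    (∀ μ' ν' ξ' : ℂ × ℂ, μ' ≠ 0 → ν' ≠ 0 → ξ' ≠ 0 →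
      (∃ c : ℂ, c ≠ 0 ∧
        ((ξ'.1 • !![μ'.1 * ν'.1, μ'.1 * ν'.2; μ'.2 * ν'.1, μ'.2 * ν'.2],
            ξ'.2 • !![μ'.2 * ν'.2, -(μ'.2 * ν'.1); -(μ'.1 * ν'.2), μ'.1 * ν'.1])
              : Matrix (Fin 2) (Fin 2) ℂ × Matrix (Fin 2) (Fin 2) ℂ)
          = c • (ξ.1 • !![μ.1 * ν.1, μ.1 * ν.2; μ.2 * ν.1, μ.2 * ν.2],
              ξ.2 • !![μ.2 * ν.2, -(μ.2 * ν.1); -(μ.1 * ν.2), μ.1 * ν.1])) →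
      (∃ a : ℂ, a ≠ 0 ∧ μ' = a • μ) ∧ (∃ b : ℂ, b ≠ 0 ∧ ν' = b • ν) ∧
        (∃ d : ℂ, d ≠ 0 ∧ ξ' = d • ξ)) :=
  ⟨segrePair_ne_zero hμ hν hξ, segrePair_fst_mul_transpose_snd μ ν ξ,
    transpose_segrePair_snd_mul_fst μ ν ξ, rank_segrePair_fst_le μ ν ξ,
    rank_segrePair_snd_le μ ν ξ, fun _ _ _ _ _ _ ⟨_, hc, h⟩ =>
      exists_smul_eq_of_segrePair_eq_smul hc hμ hν hξ h⟩
end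

section
/- For t ∈ ℂ*, the point [diag(t,1,t^{-1}), diag(t^{-1},1,t)] lies in {[g,(g^{-1})^T] : det g = 1} ⊂ ℙ(M_3(ℂ)×M_3(ℂ)), and as t → 0 the limit of [diag(t²,t,1), diag(1,t,t²)] (the same projective point after rescaling by t) is [E_{33}, E_{11}], a point with AB^T = B^T A = 0, rk A = rk B = 1. Hence the closure of {[g,(g^{-1})^T] : det g = 1} contains a point of DEG³_{1,1}. -/
/-! The torus element `g = diag(t, 1, t⁻¹)` has `(g⁻¹)ᵀ = diag(t⁻¹, 1, t)`; rescaling the pair by `t`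
makes both entries polynomial in `t`, so the limit at `t = 0` is the value there, `(E₃₃, E₁₁)`. -/

open Matrix

theorem Matrix.rank_single_self {K n : Type*} [Field K] [Fintype n] [DecidableEq n]
    (i : n) {a : K} (ha : a ≠ 0) : (single i i a).rank = 1 := by
  classical
  rw [← diagonal_single, rank_diagonal, Fintype.card_eq_one_iff]
  refine ⟨⟨i, by simpa using ha⟩, fun ⟨k, hk⟩ => ?_⟩
  obtain rfl : k = i := by_contra fun h => hk (Pi.single_eq_of_ne h _)
  rfl

section Torus

variable {K : Type*} [Field K]

theorem det_diagonal_torus {t : K} (ht : t ≠ 0) : (diagonal ![t, 1, t⁻¹]).det = 1 := by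
  simp [det_diagonal, Fin.prod_univ_three, ht]

theorem inv_transpose_diagonal_torus {t : K} (ht : t ≠ 0) :
    ((diagonal ![t, 1, t⁻¹])⁻¹)ᵀ = diagonal ![t⁻¹, 1, t] := by
  rw [inv_eq_right_inv (B := diagonal ![t⁻¹, 1, t]), diagonal_transpose]
  rw [diagonal_mul_diagonal, ← diagonal_one]
  congr 1
  ext i
  fin_cases i <;> simp [ht]

theorem diagonal_curve_eq_smul_torus {t : K} (ht : t ≠ 0) :
    ((diagonal ![t ^ 2, t, 1], diagonal ![1, t, t ^ 2]) :
        Matrix (Fin 3) (Fin 3) K × Matrix (Fin 3) (Fin 3) K)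
      = t • (diagonal ![t, 1, t⁻¹], diagonal ![t⁻¹, 1, t]) := by
  simp only [Prod.smul_mk, ← diagonal_smul]
  congr 2 <;> ext i <;> fin_cases i <;> simp [ht, sq]

end Torus

theorem tendsto_diagonal_curve {K : Type*} [Field K] [TopologicalSpace K] [IsTopologicalRing K] :
    Filter.Tendsto
      (fun t : K => ((diagonal ![t ^ 2, t, 1], diagonal ![1, t, t ^ 2])
          : Matrix (Fin 3) (Fin 3) K × Matrix (Fin 3) (Fin 3) K))
      (nhds 0) (nhds (single 2 2 1, single 0 0 1)) := by
  have hcont : Continuous (fun t : K =>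
      ((diagonal ![t ^ 2, t, 1], diagonal ![1, t, t ^ 2])
          : Matrix (Fin 3) (Fin 3) K × Matrix (Fin 3) (Fin 3) K)) := by
    refine .prodMk (.matrix_diagonal ?_) (.matrix_diagonal ?_) <;>
      exact continuous_pi fun i => by fin_cases i <;> simp <;> fun_prop
  convert hcont.tendsto 0 using 3 <;> rw [← diagonal_single] <;> congr 1 <;> ext i <;>
    fin_cases i <;> simp

/-- The curve `t ↦ [diag(t²,t,1), diag(1,t,t²)]` lies in `INV³ = {[g,(g⁻¹)ᵀ] : det g = 1}`
for `t ≠ 0` (indeed `[diag(t,1,t⁻¹),diag(t⁻¹,1,t)]` equals it after rescaling), and as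
`t → 0` it converges to `(E₃₃, E₁₁)`, a point with `A Bᵀ = Bᵀ A = 0` and
`rk A = rk B = 1`; hence the closure of `INV³` contains a point of `DEG³_{1,1}`. -/
theorem stmt17 :
    (∀ t : ℂ, t ≠ 0 → ∃ (g : Matrix (Fin 3) (Fin 3) ℂ) (c : ℂ), g.det = 1 ∧ c ≠ 0 ∧
        ((Matrix.diagonal ![t ^ 2, t, 1], Matrix.diagonal ![1, t, t ^ 2])
            : Matrix (Fin 3) (Fin 3) ℂ × Matrix (Fin 3) (Fin 3) ℂ)
          = c • (g, (g⁻¹)ᵀ)) ∧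
    Filter.Tendsto
      (fun t : ℂ => ((Matrix.diagonal ![t ^ 2, t, 1], Matrix.diagonal ![1, t, t ^ 2])
          : Matrix (Fin 3) (Fin 3) ℂ × Matrix (Fin 3) (Fin 3) ℂ))
      (nhdsWithin 0 {0}ᶜ)
      (nhds (Matrix.single (2 : Fin 3) (2 : Fin 3) (1 : ℂ),
        Matrix.single (0 : Fin 3) (0 : Fin 3) (1 : ℂ))) ∧
    Matrix.single (2 : Fin 3) (2 : Fin 3) (1 : ℂ) *
        (Matrix.single (0 : Fin 3) (0 : Fin 3) (1 : ℂ))ᵀ = 0 ∧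
    (Matrix.single (0 : Fin 3) (0 : Fin 3) (1 : ℂ))ᵀ *
        Matrix.single (2 : Fin 3) (2 : Fin 3) (1 : ℂ) = 0 ∧
    (Matrix.single (2 : Fin 3) (2 : Fin 3) (1 : ℂ)).rank = 1 ∧
    (Matrix.single (0 : Fin 3) (0 : Fin 3) (1 : ℂ)).rank = 1 := by
  refine ⟨fun t ht => ?_, tendsto_diagonal_curve.mono_left nhdsWithin_le_nhds, ?_, ?_,
    rank_single_self 2 one_ne_zero, rank_single_self 0 one_ne_zero⟩
  · refine ⟨diagonal ![t, 1, t⁻¹], t, det_diagonal_torus ht, ht, ?_⟩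
    rw [inv_transpose_diagonal_torus ht, diagonal_curve_eq_smul_torus ht]
  · simp [transpose_single]
  · simp [transpose_single]
end
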